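/- Under the same hypotheses on Φ with critical set C and constant K₀ as above, for every ε > 0 and every x outside the ε-neighborhood of C (with Φ(x) ≠ 0), one has |f'(x)| ≥ K₀⁻¹·L·ε, for all sufficiently large L. -/

import Mathlib

/-!
Write `ψ = Φ' + Φ / L`, so that `f' = L ψ / Φ` and every zero of `ψ` is a critical point of `f`.
Periodicity gives `|Φ|, |Φ'|, |Φ''| ≤ B`, and nondegeneracy gives `|Φ'| + |Φ''| ≥ μ > 0`.
Take `L ≥ 8B/μ`. Either `|Φ'(x)| > μ/4`, and then `|ψ(x)| ≥ μ/8`; or `|Φ''| ≥ μ/2` on the interval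
of radius `μ/(4B)` around `x`, so `|ψ'| ≥ μ/4` there and `ψ` vanishes within `4|ψ(x)|/μ` of `x`.
Either way `|ψ(x)| ≥ (μ/4) min(μ/(4B), ε)`, and `ε ≤ 1` because `f'` is `1`-periodic.
-/

open Set Metric Function

lemma Function.Periodic.deriv_of_add_const {g : ℝ → ℝ} {c d : ℝ} (h : ∀ z, g (z + c) = g z + d) :
    Periodic (deriv g) c := fun y => by
  rw [← deriv_comp_add_const, funext h, deriv_add_const]

protected lemma Function.Periodic.deriv {g : ℝ → ℝ} {c : ℝ} (h : Periodic g c) :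
    Periodic (deriv g) c :=
  Periodic.deriv_of_add_const fun z => (h z).trans (add_zero _).symm

lemma Function.Periodic.exists_forall_le_of_continuous {g : ℝ → ℝ} {c : ℝ} (h : Periodic g c)
    (hc : c ≠ 0) (hg : Continuous g) : ∃ m, ∀ y, g m ≤ g y := by
  obtain ⟨_, ⟨m, rfl⟩, hm⟩ := (h.compact_of_continuous hc hg).exists_isLeast (range_nonempty g)
  exact ⟨m, fun y => hm ⟨y, rfl⟩⟩

lemma Function.Periodic.exists_forall_ge_of_continuous {g : ℝ → ℝ} {c : ℝ} (h : Periodic g c)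
    (hc : c ≠ 0) (hg : Continuous g) : ∃ m, ∀ y, g y ≤ g m := by
  obtain ⟨_, ⟨m, rfl⟩, hm⟩ := (h.compact_of_continuous hc hg).exists_isGreatest (range_nonempty g)
  exact ⟨m, fun y => hm ⟨y, rfl⟩⟩

lemma Function.Periodic.infDist_setOf_eq_zero_le {F : ℝ → ℝ} {c : ℝ} (h : Periodic F c)
    (hc : 0 < c) (x : ℝ) : infDist x {y | F y = 0} ≤ c := by
  rcases eq_empty_or_nonempty {y | F y = 0} with hempty | ⟨s, hs⟩
  · rw [hempty, infDist_empty]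
    exact hc.le
  · obtain ⟨y, hy, hFy⟩ := h.exists_mem_Ico hc s x
    calc infDist x {y | F y = 0} ≤ dist x y := infDist_le_dist_of_mem (by simpa [← hFy] using hs)
      _ ≤ c := by rw [Real.dist_eq, abs_sub_le_iff]; constructor <;> linarith [hy.1, hy.2]

lemma forall_le_or_forall_le_neg_of_le_abs {g : ℝ → ℝ} {s : Set ℝ} {κ : ℝ}
    (hs : IsPreconnected s) (hg : ContinuousOn g s) (hκ : 0 < κ) (h : ∀ y ∈ s, κ ≤ |g y|) :
    (∀ y ∈ s, κ ≤ g y) ∨ (∀ y ∈ s, g y ≤ -κ) := by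
  by_contra! hsign
  obtain ⟨⟨a, ha, hga⟩, ⟨b, hb, hgb⟩⟩ := hsign
  have hga' : g a ≤ -κ := by cases abs_cases (g a) <;> linarith [h a ha]
  have hgb' : κ ≤ g b := by cases abs_cases (g b) <;> linarith [h b hb]
  obtain ⟨z, hz, hgz⟩ := hs.intermediate_value ha hb hg
    (show (0 : ℝ) ∈ Icc (g a) (g b) from ⟨by linarith, by linarith⟩)
  have := h z hz
  rw [hgz, abs_zero] at this
  linarith

lemma exists_zero_near_of_le_deriv {ψ : ℝ → ℝ} {x r κ : ℝ} (hκ : 0 < κ)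
    (hψ : DifferentiableOn ℝ ψ (Icc (x - r) (x + r)))
    (hderiv : ∀ y ∈ Icc (x - r) (x + r), κ ≤ deriv ψ y) (hx : |ψ x| ≤ κ * r) :
    ∃ y, ψ y = 0 ∧ |y - x| ≤ |ψ x| / κ := by
  set t := |ψ x| / κ
  have hκt : κ * t = |ψ x| := mul_div_cancel₀ _ hκ.ne'
  have ht : t ≤ r := (div_le_iff₀' hκ).2 hx
  have ht0 : 0 ≤ t := by positivity
  have hsub : Icc (x - t) (x + t) ⊆ Icc (x - r) (x + r) :=
    Icc_subset_Icc (by linarith) (by linarith)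
  have hψt := hψ.mono hsub
  have hgrowth := (convex_Icc (x - t) (x + t)).mul_sub_le_image_sub_of_le_deriv hψt.continuousOn
    (hψt.mono interior_subset) fun y hy => hderiv y (hsub (interior_subset hy))
  have hleft := hgrowth (x - t) ⟨le_rfl, by linarith⟩ x ⟨by linarith, by linarith⟩ (by linarith)
  have hright := hgrowth x ⟨by linarith, by linarith⟩ (x + t) ⟨by linarith, le_rfl⟩ (by linarith)
  obtain ⟨y, hy, hy0⟩ := intermediate_value_Icc (by linarith) hψt.continuousOn
    (show (0 : ℝ) ∈ Icc (ψ (x - t)) (ψ (x + t)) by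
      constructor <;> cases abs_cases (ψ x) <;> nlinarith)
  exact ⟨y, hy0, abs_sub_le_iff.2 ⟨by linarith [hy.2], by linarith [hy.1]⟩⟩

lemma mul_min_le_abs_of_le_abs_deriv {ψ : ℝ → ℝ} {x r κ ε : ℝ} (hκ : 0 < κ)
    (hψ : DifferentiableOn ℝ ψ (Icc (x - r) (x + r)))
    (hψ' : ContinuousOn (deriv ψ) (Icc (x - r) (x + r)))
    (hderiv : ∀ y ∈ Icc (x - r) (x + r), κ ≤ |deriv ψ y|)
    (hzero : ∀ y, ψ y = 0 → ε ≤ |y - x|) :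
    κ * min r ε ≤ |ψ x| := by
  by_contra! hsmall
  have hx : |ψ x| ≤ κ * r := hsmall.le.trans (by gcongr; exact min_le_left _ _)
  suffices ∃ y, ψ y = 0 ∧ |y - x| ≤ |ψ x| / κ by
    obtain ⟨y, hy0, hyx⟩ := this
    have : |ψ x| / κ < ε := (div_lt_iff₀' hκ).2 (hsmall.trans_le (by gcongr; exact min_le_right _ _))
    linarith [hzero y hy0]
  rcases forall_le_or_forall_le_neg_of_le_abs isPreconnected_Icc hψ' hκ hderiv with hpos | hneg
  · exact exists_zero_near_of_le_deriv hκ hψ hpos hx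
  · obtain ⟨y, hy0, hyx⟩ := exists_zero_near_of_le_deriv (ψ := -ψ) hκ hψ.neg
      (fun y hy => by rw [deriv.neg]; linarith [hneg y hy]) (by rwa [Pi.neg_apply, abs_neg])
    exact ⟨y, neg_eq_zero.1 hy0, by simpa using hyx⟩

lemma half_le_abs_deriv_of_abs_le {g : ℝ → ℝ} {B μ x y : ℝ} (hg : Differentiable ℝ g)
    (hB : ∀ z, |deriv g z| ≤ B) (hμ : ∀ z, μ ≤ |g z| + |deriv g z|)
    (hx : |g x| ≤ μ / 4) (hy : B * |y - x| ≤ μ / 4) : μ / 2 ≤ |deriv g y| := by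
  have hlip : |g y - g x| ≤ B * |y - x| := by
    simpa only [Real.norm_eq_abs] using convex_univ.norm_image_sub_le_of_norm_deriv_le
      (fun z _ => hg z) (fun z _ => by simpa only [Real.norm_eq_abs] using hB z)
      (mem_univ x) (mem_univ y)
  linarith [hμ y, abs_sub_abs_le_abs_sub (g y) (g x)]

lemma Function.Periodic.exists_bound_of_contDiff_two {Φ : ℝ → ℝ} {c : ℝ} (h : Periodic Φ c)
    (hc : c ≠ 0) (hΦ : ContDiff ℝ 2 Φ) :
    ∃ B, ∀ y, |Φ y| ≤ B ∧ |deriv Φ y| ≤ B ∧ |deriv (deriv Φ) y| ≤ B := by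
  have hG : Periodic (fun y => |Φ y| + |deriv Φ y| + |deriv (deriv Φ) y|) c := fun y => by
    simp only [h y, h.deriv y, h.deriv.deriv y]
  obtain ⟨m, hm⟩ := hG.exists_forall_ge_of_continuous hc <| (hΦ.continuous.abs.add
    (hΦ.continuous_deriv one_le_two).abs).add ((hΦ.deriv' (n := 1)).continuous_deriv le_rfl).abs
  refine ⟨|Φ m| + |deriv Φ m| + |deriv (deriv Φ) m|, fun y => ?_⟩
  have := hm y
  have := abs_nonneg (Φ y)
  have := abs_nonneg (deriv Φ y)
  have := abs_nonneg (deriv (deriv Φ) y)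
  exact ⟨by linarith, by linarith, by linarith⟩

lemma Function.Periodic.exists_pos_le_abs_deriv_add {Φ : ℝ → ℝ} {c : ℝ} (h : Periodic Φ c)
    (hc : c ≠ 0) (hΦ : ContDiff ℝ 2 Φ) (hC : ∀ x, deriv Φ x = 0 → deriv (deriv Φ) x ≠ 0) :
    ∃ μ > 0, ∀ y, μ ≤ |deriv Φ y| + |deriv (deriv Φ) y| := by
  have hH : Periodic (fun y => |deriv Φ y| + |deriv (deriv Φ) y|) c := fun y => by
    simp only [h.deriv y, h.deriv.deriv y]
  obtain ⟨m, hm⟩ := hH.exists_forall_le_of_continuous hc <|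
    (hΦ.continuous_deriv one_le_two).abs.add ((hΦ.deriv' (n := 1)).continuous_deriv le_rfl).abs
  refine ⟨_, ?_, hm⟩
  by_cases hm' : deriv Φ m = 0
  · simpa [hm'] using hC m hm'
  · exact add_pos_of_pos_of_nonneg (abs_pos.2 hm') (abs_nonneg _)

section

variable {Φ : ℝ → ℝ} {B μ L : ℝ}

lemma hasDerivAt_deriv_add_div (hΦ : ContDiff ℝ 2 Φ) (L y : ℝ) :
    HasDerivAt (fun z => deriv Φ z + Φ z / L) (deriv (deriv Φ) y + deriv Φ y / L) y :=
  (hΦ.differentiable_deriv_two y).hasDerivAt.add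
    ((hΦ.differentiable two_ne_zero y).hasDerivAt.div_const L)

lemma quarter_le_abs_deriv_deriv_add_div (hΦ : ContDiff ℝ 2 Φ)
    (hB : ∀ y, |deriv Φ y| ≤ B ∧ |deriv (deriv Φ) y| ≤ B)
    (hμ : ∀ y, μ ≤ |deriv Φ y| + |deriv (deriv Φ) y|) (hμ0 : 0 < μ) (hL : 8 * B ≤ μ * L)
    (hLpos : 0 < L) {x y : ℝ} (hx : |deriv Φ x| ≤ μ / 4) (hy : B * |y - x| ≤ μ / 4) :
    μ / 4 ≤ |deriv (deriv Φ) y + deriv Φ y / L| := by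
  have h2 := half_le_abs_deriv_of_abs_le hΦ.differentiable_deriv_two (fun z => (hB z).2) hμ hx hy
  have h1 : |deriv Φ y / L| ≤ μ / 8 := by
    rw [abs_div, abs_of_pos hLpos, div_le_iff₀ hLpos]
    linarith [(hB y).1]
  have := abs_sub (deriv (deriv Φ) y + deriv Φ y / L) (deriv Φ y / L)
  rw [add_sub_cancel_right] at this
  linarith

lemma mul_min_le_abs_deriv_add_div (hΦ : ContDiff ℝ 2 Φ)
    (hB : ∀ y, |Φ y| ≤ B ∧ |deriv Φ y| ≤ B ∧ |deriv (deriv Φ) y| ≤ B)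
    (hμ : ∀ y, μ ≤ |deriv Φ y| + |deriv (deriv Φ) y|) (hμ0 : 0 < μ) (hL : 8 * B ≤ μ * L)
    {x ε : ℝ} (hzero : ∀ y, deriv Φ y + Φ y / L = 0 → ε ≤ |y - x|) :
    μ / 4 * min (μ / (4 * B)) ε ≤ |deriv Φ x + Φ x / L| := by
  have h2B : μ ≤ 2 * B := by linarith [hμ x, (hB x).2.1, (hB x).2.2]
  have hBpos : 0 < B := by linarith
  have hLpos : 0 < L := pos_of_mul_pos_right (by linarith) hμ0.le
  set r := μ / (4 * B)
  have hBr : B * r = μ / 4 := by simp only [r]; field_simp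
  by_cases hx : |deriv Φ x| ≤ μ / 4
  · have hψ' : deriv (fun z => deriv Φ z + Φ z / L)
        = fun y => deriv (deriv Φ) y + deriv Φ y / L :=
      funext fun y => (hasDerivAt_deriv_add_div hΦ L y).deriv
    refine mul_min_le_abs_of_le_abs_deriv (ψ := fun z => deriv Φ z + Φ z / L) (x := x)
      (by positivity)
      (fun y _ => (hasDerivAt_deriv_add_div hΦ L y).differentiableAt.differentiableWithinAt)
      (by rw [hψ']; exact (((hΦ.deriv' (n := 1)).continuous_deriv le_rfl).add
        ((hΦ.continuous_deriv one_le_two).div_const L)).continuousOn)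
      (fun y hy => ?_) hzero
    rw [hψ']
    refine quarter_le_abs_deriv_deriv_add_div hΦ (fun z => (hB z).2) hμ hμ0 hL hLpos hx ?_
    rw [← hBr]
    exact mul_le_mul_of_nonneg_left (abs_sub_le_iff.2 ⟨by linarith [hy.2], by linarith [hy.1]⟩)
      hBpos.le
  · have hΦx : |Φ x / L| ≤ μ / 8 := by
      rw [abs_div, abs_of_pos hLpos, div_le_iff₀ hLpos]
      linarith [(hB x).1]
    calc μ / 4 * min r ε ≤ μ / 4 * r := by gcongr; exact min_le_left _ _
      _ ≤ |deriv Φ x| - |Φ x / L| := by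
        rw [← hBr]
        nlinarith
      _ ≤ |deriv Φ x + Φ x / L| := by
        simpa using abs_sub_abs_le_abs_sub (deriv Φ x) (-(Φ x / L))

end

lemma deriv_add_mul_log_abs {Φ : ℝ → ℝ} {L x : ℝ} (hΦ : DifferentiableAt ℝ Φ x) (hx : Φ x ≠ 0)
    (hL : L ≠ 0) (a : ℝ) :
    deriv (fun z => z + a + L * Real.log |Φ z|) x = L * (deriv Φ x + Φ x / L) / Φ x := by
  simp_rw [Real.log_abs]
  have hf : HasDerivAt (fun z => z + a + L * Real.log (Φ z)) (1 + L * (deriv Φ x / Φ x)) x :=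
    ((hasDerivAt_id x).add_const a).add ((hΦ.hasDerivAt.log hx).const_mul L)
  rw [hf.deriv]
  field_simp
  ring

lemma deriv_add_mul_log_abs_eq_zero {Φ : ℝ → ℝ} {L y : ℝ} (hΦ : DifferentiableAt ℝ Φ y)
    (hS : Φ y = 0 → deriv Φ y ≠ 0) (hL : L ≠ 0) (a : ℝ) (hy : deriv Φ y + Φ y / L = 0) :
    deriv (fun z => z + a + L * Real.log |Φ z|) y = 0 := by
  have hΦy : Φ y ≠ 0 := fun h0 => hS h0 (by simpa [h0] using hy)
  rw [deriv_add_mul_log_abs hΦ hΦy hL, hy, mul_zero, zero_div]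

theorem stmt3_general (Φ : ℝ → ℝ) (hΦ : ContDiff ℝ 2 Φ)
    (hper : ∀ x, Φ (x + 1) = Φ x)
    (hS' : ∀ x, Φ x = 0 → deriv Φ x ≠ 0)
    (hC' : ∀ x, deriv Φ x = 0 → deriv (deriv Φ) x ≠ 0) :
    ∃ K₀ : ℝ, 1 < K₀ ∧ ∃ L₀ : ℝ, ∀ L : ℝ, L ≥ L₀ →
      ∀ a ∈ Set.Icc (0:ℝ) 1, ∀ ε : ℝ, 0 < ε → ∀ x : ℝ, Φ x ≠ 0 →
      Metric.infDist x {y : ℝ | deriv (fun z => z + a + L * Real.log |Φ z|) y = 0} ≥ ε →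
      |deriv (fun z => z + a + L * Real.log |Φ z|) x| ≥ K₀⁻¹ * L * ε := by
  have hperΦ : Periodic Φ 1 := hper
  obtain ⟨B, hB⟩ := hperΦ.exists_bound_of_contDiff_two one_ne_zero hΦ
  obtain ⟨μ, hμ0, hμ⟩ := hperΦ.exists_pos_le_abs_deriv_add one_ne_zero hΦ hC'
  have h2B : μ ≤ 2 * B := by linarith [hμ 0, (hB 0).2.1, (hB 0).2.2]
  have hBpos : 0 < B := by linarith
  refine ⟨16 * B ^ 2 / μ ^ 2, by rw [one_lt_div (by positivity)]; nlinarith, 8 * B / μ,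
    fun L hL a _ ε hε x hx hdist => ?_⟩
  have hLμ : 8 * B ≤ μ * L := by rwa [ge_iff_le, div_le_iff₀' hμ0] at hL
  have hLpos : 0 < L := pos_of_mul_pos_right (by linarith) hμ0.le
  -- `z ↦ z + a + L log |Φ z|` commutes with translation by 1 up to adding 1
  have hε1 : ε ≤ 1 := hdist.trans <| Periodic.infDist_setOf_eq_zero_le
    (Periodic.deriv_of_add_const (d := 1) fun z => by rw [hper z]; ring) one_pos x
  have hψ := mul_min_le_abs_deriv_add_div hΦ hB hμ hμ0 hLμ (x := x) (ε := ε) fun y hy =>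
    hdist.trans <| by
      rw [← Real.dist_eq, dist_comm]
      exact infDist_le_dist_of_mem <| deriv_add_mul_log_abs_eq_zero
        (hΦ.differentiable two_ne_zero y) (hS' y) hLpos.ne' a hy
  have hr : μ / (4 * B) ≤ 1 := by rw [div_le_one (by positivity)]; linarith
  rw [deriv_add_mul_log_abs (hΦ.differentiable two_ne_zero x) hx hLpos.ne', abs_div, abs_mul,
    abs_of_pos hLpos]
  calc (16 * B ^ 2 / μ ^ 2)⁻¹ * L * ε = L * (μ / 4 * (μ / (4 * B) * ε)) / B := by
        field_simp; ring
    _ ≤ L * (μ / 4 * min (μ / (4 * B)) ε) / B := by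
        gcongr
        exact le_min (mul_le_of_le_one_right (by positivity) hε1)
          (mul_le_of_le_one_left hε.le hr)
    _ ≤ L * |deriv Φ x + Φ x / L| / B := by gcongr
    _ ≤ L * |deriv Φ x + Φ x / L| / |Φ x| := by gcongr; exact (hB x).1

/-- |f'(x)| ≥ K₀⁻¹·L·ε outside the ε-neighborhood of the critical set. -/
theorem stmt3 (Φ : ℝ → ℝ) (hΦ : ContDiff ℝ 2 Φ)
    (hper : ∀ x, Φ (x + 1) = Φ x)
    (hS' : ∀ x, Φ x = 0 → deriv Φ x ≠ 0)
    (hC' : ∀ x, deriv Φ x = 0 → deriv (deriv Φ) x ≠ 0)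
    (hSne : ∃ x, Φ x = 0) :
    ∃ K₀ : ℝ, 1 < K₀ ∧ ∃ L₀ : ℝ, ∀ L : ℝ, L ≥ L₀ →
      ∀ a ∈ Set.Icc (0:ℝ) 1, ∀ ε : ℝ, 0 < ε → ∀ x : ℝ, Φ x ≠ 0 →
      Metric.infDist x {y : ℝ | deriv (fun z => z + a + L * Real.log |Φ z|) y = 0} ≥ ε →
      |deriv (fun z => z + a + L * Real.log |Φ z|) x| ≥ K₀⁻¹ * L * ε :=
  stmt3_general Φ hΦ hper hS' hC'
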